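/- arXiv:math/0611601 — 4 statements merged into one kernel-verified Lean document; each statement's English description precedes it below -/
import Mathlib

section
/- Let X be a δ-hyperbolic geodesic metric space and Y a C-quasiconvex subset. There exist constants D, K, ε (depending only on δ and C) such that: if π is a nearest-point retraction of X onto Y and x, y ∈ X satisfy d(π(x), π(y)) ≥ D, then the concatenation of geodesics [x, π(x)] ∪ [π(x), π(y)] ∪ [π(y), y] is a (K, ε)-quasigeodesic. -/
/-! ## Coarse-geometric preliminaries: hyperbolicity, quasigeodesics,
electric (coned-off) spaces and relative hyperbolicity, following Farb. -/

/-- Four-point (Gromov) hyperbolicity condition for an abstract distance function. -/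
def GromovHyperbolicD {A : Type*} (d : A → A → ℝ) (δ : ℝ) : Prop :=
  ∀ x y z w : A, d x y + d z w ≤ max (d x z + d y w) (d x w + d y z) + 2 * δ

structure IsPseudoMetric {A : Type*} (d : A → A → ℝ) : Prop where
  refl : ∀ a, d a a = 0
  nonneg : ∀ a b, 0 ≤ d a b
  symm : ∀ a b, d a b = d b a
  triangle : ∀ a b c, d a c ≤ d a b + d b c

/-- `γ` is a (unit-speed) geodesic on `[a,b]` w.r.t. the distance `d`. -/
def GeodesicPathD {A : Type*} (d : A → A → ℝ) (γ : ℝ → A) (a b : ℝ) : Prop :=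
  ∀ s ∈ Set.Icc a b, ∀ t ∈ Set.Icc a b, d (γ s) (γ t) = |s - t|

/-- `γ` is a `(K,ε)`-quasigeodesic on `[a,b]` w.r.t. the distance `d`. -/
def QuasiGeodesicD {A : Type*} (d : A → A → ℝ) (K ε : ℝ) (γ : ℝ → A) (a b : ℝ) : Prop :=
  ∀ s ∈ Set.Icc a b, ∀ t ∈ Set.Icc a b,
    (1/K) * |s - t| - ε ≤ d (γ s) (γ t) ∧ d (γ s) (γ t) ≤ K * |s - t| + ε

/-- `(A,d)` is a geodesic space: any two points are joined by a geodesic. -/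
def GeodesicSpaceD {A : Type*} (d : A → A → ℝ) : Prop :=
  ∀ x y : A, ∃ γ : ℝ → A, γ 0 = x ∧ γ (d x y) = y ∧ GeodesicPathD d γ 0 (d x y)

/-- `Y` is `C`-quasiconvex: geodesics between points of `Y` stay in its `C`-neighbourhood. -/
def QuasiconvexD {A : Type*} (d : A → A → ℝ) (C : ℝ) (Y : Set A) : Prop :=
  ∀ (γ : ℝ → A) (a b : ℝ), GeodesicPathD d γ a b → γ a ∈ Y → γ b ∈ Y →
    ∀ t ∈ Set.Icc a b, ∃ y ∈ Y, d (γ t) y ≤ C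

/-- `π` is a nearest-point projection (retraction) of `A` onto `Y`. -/
def NearestProjD {A : Type*} (d : A → A → ℝ) (Y : Set A) (π : A → A) : Prop :=
  ∀ x, π x ∈ Y ∧ ∀ y ∈ Y, d x (π x) ≤ d x y

/-- the family `H` is uniformly `D`-separated. -/
def SeparatedD {A : Type*} {ι : Type*} (d : A → A → ℝ) (H : ι → Set A) (D : ℝ) : Prop :=
  ∀ i j, i ≠ j → ∀ x ∈ H i, ∀ y ∈ H j, D ≤ d x y

/-- the family `H` is mutually `D`-cobounded: the nearest-point projection of any
member onto any other member has diameter at most `D`. -/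
def CoboundedD {A : Type*} {ι : Type*} (d : A → A → ℝ) (H : ι → Set A) (D : ℝ) : Prop :=
  ∀ i j, i ≠ j → ∀ π : A → A, NearestProjD d (H i) π →
    ∀ x ∈ H j, ∀ y ∈ H j, d (π x) (π y) ≤ D

/-- An electric (coned-off) space `X̂` for `(A, d)` with horosphere-like sets `H i`:
for each `i` a cone point (`Sum.inr i`) is added, joined to every point of `H i` by an
edge of length `1/2`; `ed` is the resulting electric path pseudometric on `A ⊕ ι`. -/
structure Electric (A : Type*) (d : A → A → ℝ) (ι : Type*) (H : ι → Set A) where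
  ed : (A ⊕ ι) → (A ⊕ ι) → ℝ
  pseudo : IsPseudoMetric ed
  le_base : ∀ x y : A, ed (Sum.inl x) (Sum.inl y) ≤ d x y
  cone_half : ∀ i : ι, ∀ x ∈ H i, ed (Sum.inl x) (Sum.inr i) = 1/2

/-- membership in the `ε`-neighbourhood `N_ε(H i)`, for points of the coned-off space. -/
def inNbhdD {A : Type*} {ι : Type*} (d : A → A → ℝ) (H : ι → Set A) (ε : ℝ) (i : ι) :
    A ⊕ ι → Prop
  | Sum.inl x => ∃ h ∈ H i, d x h ≤ ε
  | Sum.inr j => j = i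

/-- an electric path does not backtrack: it never returns to `N_ε(H i)` after leaving it. -/
def NoBacktrackD {A : Type*} {ι : Type*} (d : A → A → ℝ) (H : ι → Set A)
    (γ : ℝ → A ⊕ ι) (a b ε : ℝ) : Prop :=
  ∀ i : ι, ∀ s ∈ Set.Icc a b, ∀ t ∈ Set.Icc a b, ∀ u ∈ Set.Icc a b,
    s ≤ t → t ≤ u → inNbhdD d H ε i (γ s) → inNbhdD d H ε i (γ u) → inNbhdD d H ε i (γ t)

/-- `t` is the entry time of `γ` into `N_ε(H i)`. -/
def IsEntryTimeD {A : Type*} {ι : Type*} (d : A → A → ℝ) (H : ι → Set A) (ε : ℝ) (i : ι)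
    (γ : ℝ → A ⊕ ι) (a b t : ℝ) : Prop :=
  t ∈ Set.Icc a b ∧ inNbhdD d H ε i (γ t) ∧
    ∀ s ∈ Set.Icc a b, inNbhdD d H ε i (γ s) → t ≤ s

/-- `t` is the exit time of `γ` from `N_ε(H i)`. -/
def IsExitTimeD {A : Type*} {ι : Type*} (d : A → A → ℝ) (H : ι → Set A) (ε : ℝ) (i : ι)
    (γ : ℝ → A ⊕ ι) (a b t : ℝ) : Prop :=
  t ∈ Set.Icc a b ∧ inNbhdD d H ε i (γ t) ∧
    ∀ s ∈ Set.Icc a b, inNbhdD d H ε i (γ s) → s ≤ t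

/-- a discrete path (a chain with steps of size at most 1) inside `S` from `x` to `y`
of total length at most `D`; a coarse rendering of "distance at most `D` in the
intrinsic path metric of `S`". -/
def ChainBoundD {A : Type*} (d : A → A → ℝ) (S : Set A) (x y : A) (D : ℝ) : Prop :=
  ∃ (n : ℕ) (c : Fin (n+1) → A), c 0 = x ∧ c (Fin.last n) = y ∧ (∀ k, c k ∈ S) ∧
    (∀ k : Fin n, d (c k.castSucc) (c k.succ) ≤ 1) ∧
    (∑ k : Fin n, d (c k.castSucc) (c k.succ)) ≤ D

/-- the entry points of `β₁, β₂` into any common `N_ε(H i)` are at distance at most `D`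
in the intrinsic path metric of `N_ε(H i)`. -/
def SimilarEntriesD {A : Type*} {ι : Type*} (d : A → A → ℝ) (H : ι → Set A) (ε D : ℝ)
    (β₁ : ℝ → A ⊕ ι) (a₁ b₁ : ℝ) (β₂ : ℝ → A ⊕ ι) (a₂ b₂ : ℝ) : Prop :=
  ∀ i : ι, ∀ t₁ t₂ : ℝ, ∀ u₁ u₂ : A,
    IsEntryTimeD d H ε i β₁ a₁ b₁ t₁ → IsEntryTimeD d H ε i β₂ a₂ b₂ t₂ →
    β₁ t₁ = Sum.inl u₁ → β₂ t₂ = Sum.inl u₂ →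
    ChainBoundD d {z | ∃ h ∈ H i, d z h ≤ ε} u₁ u₂ D

/-- same for exit points. -/
def SimilarExitsD {A : Type*} {ι : Type*} (d : A → A → ℝ) (H : ι → Set A) (ε D : ℝ)
    (β₁ : ℝ → A ⊕ ι) (a₁ b₁ : ℝ) (β₂ : ℝ → A ⊕ ι) (a₂ b₂ : ℝ) : Prop :=
  ∀ i : ι, ∀ t₁ t₂ : ℝ, ∀ u₁ u₂ : A,
    IsExitTimeD d H ε i β₁ a₁ b₁ t₁ → IsExitTimeD d H ε i β₂ a₂ b₂ t₂ →
    β₁ t₁ = Sum.inl u₁ → β₂ t₂ = Sum.inl u₂ →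
    ChainBoundD d {z | ∃ h ∈ H i, d z h ≤ ε} u₁ u₂ D

/-- Bounded penetration: electric quasigeodesics without backtracking with common
endpoints have similar intersection patterns with the horosphere-like sets. -/
def BoundedPenetrationD {A : Type*} {ι : Type*} (d : A → A → ℝ) (H : ι → Set A)
    (E : Electric A d ι H) : Prop :=
  ∀ P ε : ℝ, 0 < P → 0 ≤ ε → ∃ D : ℝ,
    ∀ (β₁ β₂ : ℝ → A ⊕ ι) (a₁ b₁ a₂ b₂ : ℝ) (x y : A),
      QuasiGeodesicD E.ed P P β₁ a₁ b₁ → NoBacktrackD d H β₁ a₁ b₁ ε →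
      QuasiGeodesicD E.ed P P β₂ a₂ b₂ → NoBacktrackD d H β₂ a₂ b₂ ε →
      β₁ a₁ = Sum.inl x → β₂ a₂ = Sum.inl x → β₁ b₁ = Sum.inl y → β₂ b₂ = Sum.inl y →
      SimilarEntriesD d H ε D β₁ a₁ b₁ β₂ a₂ b₂ ∧ SimilarExitsD d H ε D β₁ a₁ b₁ β₂ a₂ b₂

/-- `(A,d)` is weakly hyperbolic relative to `H`: the coned-off space is hyperbolic. -/
def WeaklyRelHypD {A : Type*} {ι : Type*} (d : A → A → ℝ) (H : ι → Set A) : Prop :=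
  ∃ E : Electric A d ι H, ∃ δ : ℝ, GromovHyperbolicD E.ed δ

/-- `(A,d)` is strongly hyperbolic relative to `H`: the coned-off space is hyperbolic
and bounded penetration holds. -/
def StronglyRelHypD {A : Type*} {ι : Type*} (d : A → A → ℝ) (H : ι → Set A) : Prop :=
  ∃ E : Electric A d ι H, (∃ δ : ℝ, GromovHyperbolicD E.ed δ) ∧ BoundedPenetrationD d H E

/-- Key projection lemma: in a hyperbolic space, for a nearest point projection `π`
onto a quasiconvex set `Y`, the path `w → π w → y'` is efficient for every `y' ∈ Y`. -/
lemma proj_key_aux {X : Type} [MetricSpace X] {δ C : ℝ}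
    (hgeod : GeodesicSpaceD (fun x y : X => dist x y))
    (hhyp : GromovHyperbolicD (fun x y : X => dist x y) δ)
    {Y : Set X} {π : X → X}
    (hqc : QuasiconvexD (fun x y : X => dist x y) C Y)
    (hproj : NearestProjD (fun x y : X => dist x y) Y π)
    (w y' : X) (hy' : y' ∈ Y) :
    dist w (π w) + dist (π w) y' - (2*C + 4*δ) ≤ dist w y' := by
  obtain ⟨σ, hσ0, hσL, hσg⟩ := hgeod (π w) y'
  have hσg' : ∀ s ∈ Set.Icc (0:ℝ) (dist (π w) y'), ∀ u ∈ Set.Icc (0:ℝ) (dist (π w) y'),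
      dist (σ s) (σ u) = |s - u| := hσg
  set t := (dist (π w) y' + dist w (π w) - dist w y') / 2 with ht
  have hL0 : 0 ≤ dist (π w) y' := dist_nonneg
  have ht0 : 0 ≤ t := by
    have := dist_triangle w (π w) y'
    rw [ht]; linarith
  have htL : t ≤ dist (π w) y' := by
    have h1 := dist_triangle w y' (π w)
    have h2 := dist_comm y' (π w)
    rw [ht]; linarith
  have hmem0 : (0:ℝ) ∈ Set.Icc (0:ℝ) (dist (π w) y') := ⟨le_rfl, hL0⟩
  have hmemL : dist (π w) y' ∈ Set.Icc (0:ℝ) (dist (π w) y') := ⟨hL0, le_rfl⟩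
  have hmemt : t ∈ Set.Icc (0:ℝ) (dist (π w) y') := ⟨ht0, htL⟩
  have dpz : dist (π w) (σ t) = t := by
    have e := hσg' 0 hmem0 t hmemt
    rw [hσ0] at e
    rw [e, abs_of_nonpos (by linarith : (0:ℝ) - t ≤ 0)]; ring
  have dzy : dist (σ t) y' = dist (π w) y' - t := by
    have e := hσg' t hmemt _ hmemL
    rw [hσL] at e
    rw [e, abs_of_nonpos (by linarith : t - dist (π w) y' ≤ 0)]; ring
  obtain ⟨h, hh, hzh⟩ := hqc σ 0 (dist (π w) y') hσg
    (by rw [hσ0]; exact (hproj w).1) (by rw [hσL]; exact hy') t hmemt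
  have hzh' : dist (σ t) h ≤ C := hzh
  have hwh : dist w (π w) ≤ dist w h := (hproj w).2 h hh
  have hc1 : dist w (π w) ≤ dist w (σ t) + C := by
    have := dist_triangle w (σ t) h
    linarith
  have h4 : dist w (σ t) + dist (π w) y' ≤
      max (dist w (π w) + dist (σ t) y') (dist w y' + dist (σ t) (π w)) + 2*δ :=
    hhyp w (σ t) (π w) y'
  have hwy : dist w y' = dist (π w) y' + dist w (π w) - 2*t := by rw [ht]; ring
  have hzp : dist (σ t) (π w) = t := by rw [dist_comm]; exact dpz
  rcases le_total (dist w (π w) + dist (σ t) y') (dist w y' + dist (σ t) (π w)) with hm | hm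
  · rw [max_eq_right hm] at h4; linarith
  · rw [max_eq_left hm] at h4; linarith

/-- **Lemma 4.2 (Mj–Reeves).** Given `δ, C`, there exist `D, K, ε` such that in any
`δ`-hyperbolic geodesic metric space `X` with a `C`-quasiconvex subset `Y` and a
nearest-point retraction `π` of `X` onto `Y`, if `d(π x, π y) ≥ D` then the
concatenation `[x, π x] ∪ [π x, π y] ∪ [π y, y]` is a `(K, ε)`-quasigeodesic. -/
theorem nearest_point_concat_quasigeodesic (δ C : ℝ) (hδ : 0 ≤ δ) (hC : 0 ≤ C) :
    ∃ D K ε : ℝ, 0 < K ∧ 0 ≤ ε ∧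
      ∀ (X : Type) [inst : MetricSpace X],
        GeodesicSpaceD (fun x y : X => dist x y) →
        GromovHyperbolicD (fun x y : X => dist x y) δ →
        ∀ (Y : Set X) (π : X → X),
          QuasiconvexD (fun x y : X => dist x y) C Y →
          NearestProjD (fun x y : X => dist x y) Y π →
          ∀ x y : X, D ≤ dist (π x) (π y) →
            ∀ (γ : ℝ → X) (a b c : ℝ),
              a = dist x (π x) → b = a + dist (π x) (π y) → c = b + dist (π y) y →
              γ 0 = x → γ a = π x → γ b = π y → γ c = y →
              GeodesicPathD (fun x y : X => dist x y) γ 0 a →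
              GeodesicPathD (fun x y : X => dist x y) γ a b →
              GeodesicPathD (fun x y : X => dist x y) γ b c →
              QuasiGeodesicD (fun x y : X => dist x y) K ε γ 0 c := by
  refine ⟨2*C + 5*δ + 1, 1, 6*C + 10*δ, one_pos, by linarith, ?_⟩
  intro X _ hgeod hhyp Y π hqc hproj x y hD γ a b c ha hb hc hγ0 hγa hγb hγc hg1 hg2 hg3
  have hA : ∀ (w y' : X), y' ∈ Y →
      dist w (π w) + dist (π w) y' - (2*C + 4*δ) ≤ dist w y' :=
    fun w y' hy' => proj_key_aux hgeod hhyp hqc hproj w y' hy'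
  have hg1' : ∀ s ∈ Set.Icc (0:ℝ) a, ∀ t ∈ Set.Icc (0:ℝ) a,
      dist (γ s) (γ t) = |s - t| := hg1
  have hg2' : ∀ s ∈ Set.Icc a b, ∀ t ∈ Set.Icc a b,
      dist (γ s) (γ t) = |s - t| := hg2
  have hg3' : ∀ s ∈ Set.Icc b c, ∀ t ∈ Set.Icc b c,
      dist (γ s) (γ t) = |s - t| := hg3
  have h0a : 0 ≤ a := ha ▸ dist_nonneg
  have hab : a ≤ b := by
    have := dist_nonneg (x := π x) (y := π y); linarith [hb]
  have hbc : b ≤ c := by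
    have := dist_nonneg (x := π y) (y := y); linarith [hc]
  have hpY : γ a ∈ Y := by rw [hγa]; exact (hproj x).1
  have hqY : γ b ∈ Y := by rw [hγb]; exact (hproj y).1
  have dxs : ∀ s, 0 ≤ s → s ≤ a → dist x (γ s) = s ∧ dist (γ s) (π x) = a - s := by
    intro s h1 h2
    constructor
    · have e := hg1' 0 ⟨le_rfl, h0a⟩ s ⟨h1, h2⟩
      rw [hγ0] at e
      rw [e, abs_of_nonpos (by linarith : (0:ℝ) - s ≤ 0)]; ring
    · have e := hg1' s ⟨h1, h2⟩ a ⟨h0a, le_rfl⟩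
      rw [hγa] at e
      rw [e, abs_of_nonpos (by linarith : s - a ≤ 0)]; ring
  have dmid : ∀ s, a ≤ s → s ≤ b → dist (π x) (γ s) = s - a ∧ dist (γ s) (π y) = b - s := by
    intro s h1 h2
    constructor
    · have e := hg2' a ⟨le_rfl, hab⟩ s ⟨h1, h2⟩
      rw [hγa] at e
      rw [e, abs_of_nonpos (by linarith : a - s ≤ 0)]; ring
    · have e := hg2' s ⟨h1, h2⟩ b ⟨hab, le_rfl⟩
      rw [hγb] at e
      rw [e, abs_of_nonpos (by linarith : s - b ≤ 0)]; ring
  have dlast : ∀ t, b ≤ t → t ≤ c → dist (π y) (γ t) = t - b ∧ dist (γ t) y = c - t := by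
    intro t h1 h2
    constructor
    · have e := hg3' b ⟨le_rfl, hbc⟩ t ⟨h1, h2⟩
      rw [hγb] at e
      rw [e, abs_of_nonpos (by linarith : b - t ≤ 0)]; ring
    · have e := hg3' t ⟨h1, h2⟩ c ⟨hbc, le_rfl⟩
      rw [hγc] at e
      rw [e, abs_of_nonpos (by linarith : t - c ≤ 0)]; ring
  have hpq' : dist (π x) (π y) = b - a := by rw [hb]; ring
  have hyp' : dist y (π y) = c - b := by rw [dist_comm y (π y), hc]; ring
  have main : ∀ s t : ℝ, 0 ≤ s → s ≤ t → t ≤ c →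
      (t - s) - (6*C + 10*δ) ≤ dist (γ s) (γ t) ∧ dist (γ s) (γ t) ≤ t - s := by
    intro s t hs hst htc
    rcases le_or_gt t a with hta | hta
    · -- both in [0,a]
      have e := hg1' s ⟨hs, le_trans hst hta⟩ t ⟨le_trans hs hst, hta⟩
      rw [e, abs_of_nonpos (by linarith : s - t ≤ 0)]
      constructor <;> linarith
    rcases le_or_gt t b with htb | htb
    · rcases le_or_gt s a with hsa | hsa
      · -- s ∈ [0,a], t ∈ (a,b]
        obtain ⟨h, hh, hvh⟩ := hqc γ a b hg2 hpY hqY t ⟨hta.le, htb⟩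
        have hvh' : dist (γ t) h ≤ C := hvh
        obtain ⟨e1, e2⟩ := dxs s hs hsa
        obtain ⟨e3, _⟩ := dmid t hta.le htb
        have hk := hA x h hh
        constructor
        · linarith [dist_triangle x (γ s) h, dist_triangle (π x) h (γ t),
            dist_comm h (γ t), dist_triangle (γ s) (γ t) h, ha]
        · linarith [dist_triangle (γ s) (π x) (γ t)]
      · -- both in [a,b]
        have e := hg2' s ⟨hsa.le, le_trans hst htb⟩ t ⟨le_trans hsa.le hst, htb⟩
        rw [e, abs_of_nonpos (by linarith : s - t ≤ 0)]
        constructor <;> linarith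
    rcases le_or_gt s a with hsa | hsa
    · -- s ∈ [0,a], t ∈ (b,c]
      obtain ⟨e1, e2⟩ := dxs s hs hsa
      obtain ⟨e3, e4⟩ := dlast t htb.le htc
      have hk1 := hA x (π y) (hproj y).1
      have hk2 := hA y (π x) (hproj x).1
      have h4 : dist (γ s) (π y) + dist (γ t) (π x) ≤
          max (dist (γ s) (γ t) + dist (π y) (π x))
            (dist (γ s) (π x) + dist (π y) (γ t)) + 2*δ :=
        hhyp (γ s) (π y) (γ t) (π x)
      have tri1 := dist_triangle x (γ s) (π y)
      have tri2 := dist_triangle y (γ t) (π x)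
      have hc1 := dist_comm y (γ t)
      have hc2 := dist_comm (π y) (π x)
      rcases le_total (dist (γ s) (γ t) + dist (π y) (π x))
          (dist (γ s) (π x) + dist (π y) (γ t)) with hm | hm
      · rw [max_eq_right hm] at h4
        constructor <;> linarith
      · rw [max_eq_left hm] at h4
        constructor
        · linarith
        · linarith [dist_triangle (γ s) (π x) (γ t), dist_triangle (π x) (π y) (γ t)]
    rcases le_or_gt s b with hsb | hsb
    · -- s ∈ (a,b], t ∈ (b,c]
      obtain ⟨h, hh, huh⟩ := hqc γ a b hg2 hpY hqY s ⟨hsa.le, hsb⟩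
      have huh' : dist (γ s) h ≤ C := huh
      obtain ⟨_, e2⟩ := dmid s hsa.le hsb
      obtain ⟨e3, e4⟩ := dlast t htb.le htc
      have hk := hA y h hh
      constructor
      · linarith [dist_triangle y (γ t) h, dist_comm y (γ t),
          dist_triangle (π y) h (γ s), dist_comm h (γ s), dist_comm (γ s) (π y),
          dist_triangle (γ t) (γ s) h, dist_comm (γ t) (γ s)]
      · linarith [dist_triangle (γ s) (π y) (γ t), dist_comm (γ s) (π y)]
    · -- both in [b,c]
      have e := hg3' s ⟨hsb.le, le_trans hst htc⟩ t ⟨le_trans hsb.le hst, htc⟩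
      rw [e, abs_of_nonpos (by linarith : s - t ≤ 0)]
      constructor <;> linarith
  intro s hs t ht
  show 1/1 * |s - t| - (6*C + 10*δ) ≤ dist (γ s) (γ t) ∧
      dist (γ s) (γ t) ≤ 1 * |s - t| + (6*C + 10*δ)
  rcases le_total s t with hst | hst
  · obtain ⟨hm1, hm2⟩ := main s t hs.1 hst ht.2
    rw [abs_of_nonpos (by linarith : s - t ≤ 0)]
    constructor <;> linarith
  · obtain ⟨hm1, hm2⟩ := main t s ht.1 hst hs.2
    rw [abs_of_nonneg (by linarith : 0 ≤ s - t), dist_comm (γ s) (γ t)]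
    constructor <;> linarith
end

section
/- Given δ and C, there exist D and M such that the following holds: if Y and Z are C-quasiconvex subsets of a δ-hyperbolic geodesic metric space X, and π denotes nearest-point projection onto Y, then whenever π(Z) has diameter greater than D, the set π(Z) lies in the M-neighborhood of Z. -/
/-- Nearest-point projection to a quasiconvex set: coarse reverse triangle inequality. -/
private lemma projA {X : Type} [MetricSpace X] {δ C : ℝ} (hδ : 0 ≤ δ) (hC : 0 ≤ C)
    (geo : GeodesicSpaceD (fun x y : X => dist x y))
    (hyp : GromovHyperbolicD (fun x y : X => dist x y) δ)
    {Y : Set X} {π : X → X}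
    (hQY : QuasiconvexD (fun x y : X => dist x y) C Y)
    (hπ : NearestProjD (fun x y : X => dist x y) Y π)
    (x y : X) (hy : y ∈ Y) :
    dist x (π x) + dist (π x) y - (2*C + 4*δ + 1) ≤ dist x y := by
  by_cases h : dist (π x) y ≤ C + 2*δ + 1
  · have h1 := (hπ x).2 y hy
    simp only at h1
    linarith
  · push_neg at h
    obtain ⟨γ, hγ0, hγd, hγ⟩ := geo (π x) y
    simp only at hγ0 hγd hγ
    set L := dist (π x) y with hL
    have hL0 : (0:ℝ) ≤ L := dist_nonneg
    set t := C + 2*δ + 1 with htdef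
    have ht : t ∈ Set.Icc (0:ℝ) L := ⟨by linarith, by linarith⟩
    have h0mem : (0:ℝ) ∈ Set.Icc (0:ℝ) L := ⟨le_refl _, hL0⟩
    have hLmem : L ∈ Set.Icc (0:ℝ) L := ⟨hL0, le_refl _⟩
    obtain ⟨y', hy', hwy'⟩ :=
      hQY γ 0 L hγ (by rw [hγ0]; exact (hπ x).1) (by rw [hγd]; exact hy) t ht
    simp only at hwy'
    have hwπ : dist (γ t) (π x) = t := by
      have h5 := hγ t ht 0 h0mem
      simp only at h5
      rw [hγ0] at h5
      rw [h5, sub_zero, abs_of_nonneg (by linarith)]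
    have hwy : dist (γ t) y = L - t := by
      have h5 := hγ t ht L hLmem
      simp only at h5
      rw [hγd] at h5
      rw [h5, abs_sub_comm, abs_of_nonneg (by linarith)]
    have hxw : dist x (π x) ≤ dist x (γ t) + C := by
      have h1 := (hπ x).2 y' hy'
      simp only at h1
      have h2 := dist_triangle x (γ t) y'
      linarith
    have h4 := hyp x (γ t) (π x) y
    simp only at h4
    rcases max_cases (dist x (π x) + dist (γ t) y) (dist x y + dist (γ t) (π x)) with
      ⟨heq, _⟩ | ⟨heq, _⟩ <;> rw [heq] at h4 <;> linarith

/-- If projections of two points are far apart, the broken path through the projections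
is coarsely a geodesic. -/
private lemma projB {X : Type} [MetricSpace X] {δ C : ℝ} (hδ : 0 ≤ δ) (hC : 0 ≤ C)
    (geo : GeodesicSpaceD (fun x y : X => dist x y))
    (hyp : GromovHyperbolicD (fun x y : X => dist x y) δ)
    {Y : Set X} {π : X → X}
    (hQY : QuasiconvexD (fun x y : X => dist x y) C Y)
    (hπ : NearestProjD (fun x y : X => dist x y) Y π)
    (z1 z2 : X) (hP : 2*C + 4*δ + 1 + δ < dist (π z1) (π z2)) :
    dist z1 (π z1) + dist (π z1) (π z2) + dist (π z2) z2 - (2*(2*C + 4*δ + 1) + 2*δ)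
      ≤ dist z1 z2 := by
  have a1 := projA hδ hC geo hyp hQY hπ z1 (π z2) (hπ z2).1
  have a2 := projA hδ hC geo hyp hQY hπ z2 (π z1) (hπ z1).1
  have h4 := hyp z1 (π z2) z2 (π z1)
  simp only at h4
  have hc1 : dist (π z2) (π z1) = dist (π z1) (π z2) := dist_comm _ _
  have hc2 : dist (π z2) z2 = dist z2 (π z2) := dist_comm _ _
  rcases max_cases (dist z1 z2 + dist (π z2) (π z1)) (dist z1 (π z1) + dist (π z2) z2) with
    ⟨heq, _⟩ | ⟨heq, _⟩ <;> rw [heq] at h4 <;> linarith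

/-- **Corollary 4.3 (Mj–Reeves).** Given `δ, C`, there exist `D, M` such that:
if `Y, Z` are `C`-quasiconvex subsets of a `δ`-hyperbolic geodesic metric space
`X` and `π` is a nearest-point projection onto `Y`, then whenever `π(Z)` has
diameter greater than `D`, the set `π(Z)` lies in the `M`-neighbourhood of `Z`. -/
theorem large_projection_near (δ C : ℝ) (hδ : 0 ≤ δ) (hC : 0 ≤ C) :
    ∃ D M : ℝ,
      ∀ (X : Type) [inst : MetricSpace X],
        GeodesicSpaceD (fun x y : X => dist x y) →
        GromovHyperbolicD (fun x y : X => dist x y) δ →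
        ∀ (Y Z : Set X) (π : X → X),
          QuasiconvexD (fun x y : X => dist x y) C Y →
          QuasiconvexD (fun x y : X => dist x y) C Z →
          NearestProjD (fun x y : X => dist x y) Y π →
          D < Metric.diam (π '' Z) →
          ∀ p ∈ π '' Z, ∃ z ∈ Z, dist p z ≤ M := by
  set K1 := 2*C + 4*δ + 1 with hK1
  set K2 := 2*K1 + 2*δ with hK2
  have hK1nn : 0 ≤ K1 := by rw [hK1]; linarith
  have hK2nn : 0 ≤ K2 := by rw [hK2]; linarith
  refine ⟨2*K2 + 2, K2 + 2*δ + C, ?_⟩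
  intro X inst geo hyp Y Z π hQY hQZ hπ hdiam p hp
  obtain ⟨z0, hz0, rfl⟩ := hp
  have key : ∀ z2 ∈ Z, K2 < dist (π z0) (π z2) →
      ∃ z ∈ Z, dist (π z0) z ≤ K2 + 2*δ + C := by
    intro z2 hz2 hPbig
    have hP : 2*C + 4*δ + 1 + δ < dist (π z0) (π z2) := by
      rw [hK2, hK1] at hPbig; linarith
    have hB := projB hδ hC geo hyp hQY hπ z0 z2 hP
    rw [← hK1, ← hK2] at hB
    obtain ⟨γ, hγ0, hγL, hγ⟩ := geo z0 z2
    simp only at hγ0 hγL hγ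
    set L := dist z0 z2 with hLdef
    set t0 := dist z0 (π z0) with ht0def
    have hq : (0:ℝ) ≤ dist (π z2) z2 := dist_nonneg
    have ht0L : t0 ≤ L := by linarith
    have ht0 : t0 ∈ Set.Icc (0:ℝ) L := ⟨dist_nonneg, ht0L⟩
    have hL0 : (0:ℝ) ≤ L := dist_nonneg
    have h0mem : (0:ℝ) ∈ Set.Icc (0:ℝ) L := ⟨le_refl _, hL0⟩
    have hLmem : L ∈ Set.Icc (0:ℝ) L := ⟨hL0, le_refl _⟩
    have hz0w : dist z0 (γ t0) = t0 := by
      have h5 := hγ 0 h0mem t0 ht0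
      simp only at h5
      rw [hγ0] at h5
      rw [h5, zero_sub, abs_neg, abs_of_nonneg dist_nonneg]
    have hwz2 : dist (γ t0) z2 = L - t0 := by
      have h5 := hγ t0 ht0 L hLmem
      simp only at h5
      rw [hγL] at h5
      rw [h5, abs_sub_comm, abs_of_nonneg (by linarith)]
    have h4 := hyp (π z0) (γ t0) z0 z2
    simp only at h4
    have hw : dist (π z0) (γ t0) ≤ K2 + 2*δ := by
      have htri : dist (π z0) z2 ≤ dist (π z0) (π z2) + dist (π z2) z2 := dist_triangle _ _ _
      have hc1 : dist (π z0) z0 = t0 := dist_comm _ _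
      have hc2 : dist (γ t0) z0 = dist z0 (γ t0) := dist_comm _ _
      rcases max_cases (dist (π z0) z0 + dist (γ t0) z2) (dist (π z0) z2 + dist (γ t0) z0)
        with ⟨heq, _⟩ | ⟨heq, _⟩ <;> rw [heq] at h4 <;> linarith
    obtain ⟨z, hz, hwz⟩ :=
      hQZ γ 0 L hγ (by rw [hγ0]; exact hz0) (by rw [hγL]; exact hz2) t0 ht0
    simp only at hwz
    refine ⟨z, hz, ?_⟩
    have := dist_triangle (π z0) (γ t0) z
    linarith
  have hex : ∃ a ∈ π '' Z, ∃ b ∈ π '' Z, 2*K2 + 2 < dist a b := by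
    by_contra hall
    push_neg at hall
    have := Metric.diam_le_of_forall_dist_le (by linarith) hall
    linarith
  obtain ⟨a, ⟨z1, hz1, rfl⟩, b, ⟨z2, hz2, rfl⟩, hab⟩ := hex
  have htr : dist (π z1) (π z2) ≤ dist (π z1) (π z0) + dist (π z0) (π z2) :=
    dist_triangle _ _ _
  rcases le_or_gt (dist (π z0) (π z1)) K2 with h1 | h1
  · have h2 : K2 < dist (π z0) (π z2) := by
      rw [dist_comm (π z1) (π z0)] at htr; linarith
    exact key z2 hz2 h2
  · exact key z1 hz1 h1
end

section
/- Let Φ be a pseudo-Anosov diffeomorphism of a punctured hyperbolic surface Σ fixing all punctures, and equip the blown-up surface Σ_B with the electric (zero-on-boundary) piecewise Euclidean metric coming from the stable and unstable foliations (assumed orthogonal to the boundary). Then for every k > 1 there exists n ≥ 1 such that for every electric geodesic λ in Σ_B, max(length(Φⁿ(λ_eu)), length(Φ⁻ⁿ(λ_eu))) ≥ k · length(λ_eu), where λ_eu denotes the union of the Euclidean segments of λ. -/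
/-! Let `Φ` be a pseudo-Anosov diffeomorphism of a punctured hyperbolic surface
`Σ` fixing all punctures, and let `Σ_B` be the blown-up surface with the electric
(zero-on-the-boundary) piecewise Euclidean metric coming from the stable and
unstable foliations of `Φ` (assumed orthogonal to the boundary). We abstract the
resulting combinatorial data:

* `Λ` is the set of electric geodesics of `Σ_B`;
* `eu l` is the total length of the union `λ_eu` of the Euclidean segments of
  `l`, and `eus l`, `euu l` are the lengths of its projections onto the stable
  and unstable foliations, so that `max (eus l) (euu l) ≥ (1/2) eu l`;
* `act : ℤ → Λ → Λ` is the induced action of the powers of `Φ` on electric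
  geodesics, and `μ > 1` is the stretch factor of `Φ`: `Φⁿ` expands the unstable
  projection and `Φ⁻ⁿ` the stable projection by at least `μⁿ`.

The statement: for every `k > 1` there exists `n ≥ 1` such that for every
electric geodesic `λ`,
`max (length (Φⁿ λ_eu)) (length (Φ⁻ⁿ λ_eu)) ≥ k · length λ_eu`. -/
theorem pseudo_anosov_flare
    (Λ : Type) (eu eus euu : Λ → ℝ) (act : ℤ → Λ → Λ) (μ : ℝ)
    (hμ : 1 < μ)
    (heu : ∀ l, 0 ≤ eu l) (hes : ∀ l, 0 ≤ eus l) (heuu : ∀ l, 0 ≤ euu l)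
    (hhalf : ∀ l, eu l ≤ 2 * max (eus l) (euu l))
    (hact0 : ∀ l, act 0 l = l)
    (hactadd : ∀ (m n : ℤ) (l : Λ), act (m + n) l = act m (act n l))
    (hstru : ∀ (n : ℕ) (l : Λ), μ ^ n * euu l ≤ eu (act (n : ℤ) l))
    (hstrs : ∀ (n : ℕ) (l : Λ), μ ^ n * eus l ≤ eu (act (-(n : ℤ)) l)) :
    ∀ k : ℝ, 1 < k → ∃ n : ℕ, 1 ≤ n ∧ ∀ l : Λ,
      k * eu l ≤ max (eu (act (n : ℤ) l)) (eu (act (-(n : ℤ)) l)) := by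
  intro k hk
  obtain ⟨m, hm⟩ := pow_unbounded_of_one_lt (2 * k) hμ
  refine ⟨max m 1, le_max_right _ _, fun l => ?_⟩
  have hμ0 : (0:ℝ) < μ := lt_trans one_pos hμ
  have hpow : 2 * k ≤ μ ^ max m 1 :=
    le_trans hm.le (pow_le_pow_right₀ hμ.le (le_max_left _ _))
  have h2k : (0:ℝ) < 2 * k := by linarith
  rcases le_total (eus l) (euu l) with h | h
  · refine le_trans ?_ (le_max_of_le_left (hstru (max m 1) l))
    have : eu l ≤ 2 * euu l := le_trans (hhalf l) (by rw [max_eq_right h])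
    nlinarith [heuu l, pow_pos hμ0 (max m 1)]
  · refine le_trans ?_ (le_max_of_le_right (hstrs (max m 1) l))
    have : eu l ≤ 2 * eus l := le_trans (hhalf l) (by rw [max_eq_left h])
    nlinarith [hes l, pow_pos hμ0 (max m 1)]
end

section
/- Let X be a tree of spaces over a simplicial tree T with projection P : X → T, and let X̂ be the induced tree of coned-off spaces. If X̂ is hyperbolic, then the maximal cone-subtrees T_α are uniformly quasiconvex subsets of X̂; moreover, each geodesic edge-path in T_α is a geodesic in X̂. -/
/-! ## Trees of strongly relatively hyperbolic spaces (Bestvina–Feighn setup).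
The structure bundles: a simplicial tree `T = (V, G)`; a total space `(X, d)`
projecting to `T`; vertex spaces (fibres of `P`) with their induced path metrics
`dv`, uniformly properly embedded, each strongly hyperbolic relative to its
horosphere-like sets (qi-embedded condition and condition (6) of the definition);
edge spaces with quasi-isometrically embedded edge-to-vertex maps (qi-embedded
condition); the strictly type-preserving condition; the induced tree of coned-off
spaces `X̂` (carrier `X ⊕ Λ`, metric `dhat`) and the qi-preserving electrocution
condition; and the cone locus with its adjacency, whose components give the
maximal cone-subtrees `T_α` and the maximal cone-subtrees of horosphere-like
spaces `C_α`. -/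
structure TreeOfRelHypSpaces where
  /-- vertices of the underlying simplicial tree -/
  V : Type
  G : SimpleGraph V
  htree : G.IsTree
  /-- total space -/
  X : Type
  d : X → X → ℝ
  d_pseudo : IsPseudoMetric d
  d_geodesic : GeodesicSpaceD d
  /-- projection to the tree -/
  P : X → V
  /-- induced path metric on the vertex space `X_v = P⁻¹ v` -/
  dv : V → X → X → ℝ
  dv_pseudo : ∀ v, IsPseudoMetric (dv v)
  d_le_dv : ∀ v x y, P x = v → P y = v → d x y ≤ dv v x y
  /-- vertex spaces are uniformly properly embedded -/
  unif_proper : ∀ M : ℝ, ∃ N : ℝ, ∀ v x y, P x = v → P y = v → d x y ≤ M → dv v x y ≤ N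
  /-- index set of horosphere-like sets of the vertex spaces -/
  Λ : Type
  hsv : Λ → V
  hs : Λ → Set X
  hs_sub : ∀ α, ∀ x ∈ hs α, P x = hsv α
  hs_separated : ∃ D > (0:ℝ), ∀ v : V,
    SeparatedD (dv v) (fun α : {α : Λ // hsv α = v} => hs α.1) D
  /-- each vertex space is strongly hyperbolic relative to its horosphere-like sets -/
  vertex_srh : ∀ v : V,
    StronglyRelHypD (fun x y : {x : X // P x = v} => dv v x.1 y.1)
      (fun α : {α : Λ // hsv α = v} => {x : {x : X // P x = v} | x.1 ∈ hs α.1})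
  /-- edge spaces, one for each oriented edge of the tree -/
  Xe : ∀ u v : V, G.Adj u v → Type
  de : ∀ (u v : V) (h : G.Adj u v), Xe u v h → Xe u v h → ℝ
  de_pseudo : ∀ u v h, IsPseudoMetric (de u v h)
  /-- edge-space-to-vertex-space map (into the fibre over `u`) -/
  fe : ∀ (u v : V) (h : G.Adj u v), Xe u v h → X
  fe_fiber : ∀ u v h p, P (fe u v h p) = u
  K : ℝ
  ε : ℝ
  hK : 1 ≤ K
  hε : 0 ≤ ε
  /-- the qi-embedded condition -/
  qi_embed : ∀ (u v : V) (h : G.Adj u v) (p q : Xe u v h),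
    (1/K) * de u v h p q - ε ≤ dv u (fe u v h p) (fe u v h q) ∧
      dv u (fe u v h p) (fe u v h q) ≤ K * de u v h p q + ε
  /-- horosphere-like sets of the edge spaces -/
  Λe : ∀ u v : V, G.Adj u v → Type
  hse : ∀ (u v : V) (h : G.Adj u v), Λe u v h → Set (Xe u v h)
  /-- the strictly type-preserving condition: the preimage of a horosphere-like
  vertex set under an edge-to-vertex map is empty or an edge horosphere-like set -/
  strictly_type_preserving : ∀ (u v : V) (h : G.Adj u v) (α : Λ), hsv α = u →
    (fe u v h ⁻¹' hs α = (∅ : Set (Xe u v h)) ∨ ∃ β, fe u v h ⁻¹' hs α = hse u v h β)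
  /-- the induced tree of coned-off spaces `X̂`: its carrier is `X ⊕ Λ`
  (cone points `Sum.inr α`, one over each horosphere-like set) with metric `dhat` -/
  dhat : (X ⊕ Λ) → (X ⊕ Λ) → ℝ
  dhat_pseudo : IsPseudoMetric dhat
  dhat_le : ∀ x y : X, dhat (Sum.inl x) (Sum.inl y) ≤ d x y
  dhat_cone : ∀ α, ∀ x ∈ hs α, dhat (Sum.inl x) (Sum.inr α) = 1/2
  /-- the coned-off vertex spaces are uniformly hyperbolic -/
  conedoff_unif_hyp : ∃ δ : ℝ, ∀ v : V, ∀ p q r s : X ⊕ Λ,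
    Sum.elim P hsv p = v → Sum.elim P hsv q = v → Sum.elim P hsv r = v →
    Sum.elim P hsv s = v →
    dhat p q + dhat r s ≤ max (dhat p r + dhat q s) (dhat p s + dhat q r) + 2 * δ
  /-- coned-off (electric) metrics on the edge spaces -/
  dehat : ∀ (u v : V) (h : G.Adj u v), Xe u v h → Xe u v h → ℝ
  dehat_pseudo : ∀ u v h, IsPseudoMetric (dehat u v h)
  /-- the qi-preserving electrocution condition: the induced maps of coned-off edge
  spaces into coned-off vertex spaces are uniform quasi-isometric embeddings -/
  qi_electro : ∀ (u v : V) (h : G.Adj u v) (p q : Xe u v h),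
    (1/K) * dehat u v h p q - ε ≤ dhat (Sum.inl (fe u v h p)) (Sum.inl (fe u v h q)) ∧
      dhat (Sum.inl (fe u v h p)) (Sum.inl (fe u v h q)) ≤ K * dehat u v h p q + ε
  /-- the cone locus: adjacency between cone points over an edge of the tree -/
  coneAdj : Λ → Λ → Prop
  coneAdj_adj : ∀ α β, coneAdj α β → G.Adj (hsv α) (hsv β)
  coneAdj_dist : ∀ α β, coneAdj α β → dhat (Sum.inr α) (Sum.inr β) ≤ 1
  /-- the projection `P' : X̂ → T` is distance non-increasing -/
  proj_lip : ∀ p q : X ⊕ Λ,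
    (G.dist (Sum.elim P hsv p) (Sum.elim P hsv q) : ℝ) ≤ dhat p q
  /-- `P'` restricted to each maximal cone-subtree is an isometry onto a subtree -/
  cone_tree_iso : ∀ α β : Λ,
    Relation.ReflTransGen (fun a b => coneAdj a b ∨ coneAdj b a) α β →
    dhat (Sum.inr α) (Sum.inr β) ≤ (G.dist (hsv α) (hsv β) : ℝ)

namespace TreeOfRelHypSpaces

variable (S : TreeOfRelHypSpaces)

/-- two cone points lie in the same component of the cone locus,
i.e. in the same maximal cone-subtree. -/
def sameTree (α β : S.Λ) : Prop :=
  Relation.ReflTransGen (fun a b => S.coneAdj a b ∨ S.coneAdj b a) α β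

/-- the maximal cone-subtree of horosphere-like spaces `C_α ⊆ X` through `α`. -/
def Cset (α : S.Λ) : Set S.X := {x | ∃ β, S.sameTree α β ∧ x ∈ S.hs β}

/-- the maximal cone-subtree `T_α ⊆ X̂` through `α` (as a subset of `X̂`). -/
def Tset (α : S.Λ) : Set (S.X ⊕ S.Λ) := {p | ∃ β, p = Sum.inr β ∧ S.sameTree α β}

/-- the projection `P' : X̂ → T`. -/
def Phat : S.X ⊕ S.Λ → S.V := Sum.elim S.P S.hsv

/-- A hallway of length `2m` in the induced tree of coned-off spaces: a disk
`f : {-m,…,m} × I → X̂` (reindexed over `Fin (2m+1)`) whose slice `f i` is a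
geodesic of length `len i` in the coned-off vertex space over `v i`. -/
structure Hallway (m : ℕ) where
  v : Fin (2*m+1) → S.V
  len : Fin (2*m+1) → ℝ
  len_nonneg : ∀ i, 0 ≤ len i
  f : Fin (2*m+1) → ℝ → S.X ⊕ S.Λ
  geod : ∀ i, ∀ s ∈ Set.Icc (0:ℝ) 1, ∀ t ∈ Set.Icc (0:ℝ) 1,
    S.dhat (f i s) (f i t) = len i * |s - t|
  fiber : ∀ i, ∀ t ∈ Set.Icc (0:ℝ) 1, S.Phat (f i t) = v i

namespace Hallway

variable {S} {m : ℕ} (h : S.Hallway m)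

/-- essential: the projected edge path in the tree does not backtrack
(hence is a geodesic segment in the tree). -/
def Essential : Prop :=
  (∀ i : Fin (2*m), S.G.Adj (h.v i.castSucc) (h.v i.succ)) ∧ Function.Injective h.v

/-- `ρ`-thin. -/
def Thin (ρ : ℝ) : Prop :=
  ∀ i : Fin (2*m), ∀ t ∈ Set.Icc (0:ℝ) 1,
    S.dhat (h.f i.castSucc t) (h.f i.succ t) ≤ ρ

/-- `lam`-hyperbolic: the middle slice is `lam`-times shorter than one of the ends. -/
def Hyp (lam : ℝ) : Prop :=
  lam * h.len ⟨m, by omega⟩ ≤ max (h.len ⟨0, by omega⟩) (h.len ⟨2*m, by omega⟩)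

/-- cone-bounded: the boundary of the hallway lies in the cone locus. -/
def ConeBounded : Prop :=
  ∀ i, (∃ α, h.f i 0 = Sum.inr α) ∧ (∃ α, h.f i 1 = Sum.inr α)

end Hallway

/-- the hallways flare condition of Bestvina–Feighn for the induced tree of
coned-off spaces. -/
def HallwaysFlare : Prop :=
  ∃ lam > (1:ℝ), ∃ m : ℕ, 1 ≤ m ∧ ∀ ρ : ℝ, ∃ Hc : ℝ, ∀ h : S.Hallway m,
    h.Essential → h.Thin ρ → Hc ≤ h.len ⟨m, by omega⟩ → h.Hyp lam

/-- the cone-bounded hallways strictly flare condition. -/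
def ConeBoundedFlare : Prop :=
  ∃ lam > (1:ℝ), ∃ m : ℕ, 1 ≤ m ∧ ∀ h : S.Hallway m,
    h.Essential → h.ConeBounded → h.Hyp lam

end TreeOfRelHypSpaces

/-! The projection `P'` is 1-Lipschitz and isometric on each `T_α`. Hence if a geodesic of `X̂`
joins two cone points of `T_α`, the image under `P'` of any point `z` on it lies on the tree
geodesic between their projections, at the same distances from the endpoints as `z`. In a tree,
every walk between two vertices passes through the vertices of the geodesic between them, so
the walk traced out by a chain of adjacent cone points joining the endpoints in `T_α` yields a
cone point of `T_α` over `P' z`, again at the same distances from the endpoints as `z`. The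
four-point condition then puts `z` within `2Δ` of that cone point. -/

theorem SimpleGraph.IsTree.mem_support_of_dist_add_dist_eq {V : Type*} {G : SimpleGraph V}
    (hG : G.IsTree) {x y w : V} (h : G.dist x w + G.dist w y = G.dist x y) (p : G.Walk x y) :
    w ∈ p.support := by
  classical
  obtain ⟨q₁, hq₁⟩ := hG.connected.exists_walk_length_eq_dist x w
  obtain ⟨q₂, hq₂⟩ := hG.connected.exists_walk_length_eq_dist w y
  have hq : (q₁.append q₂).IsPath :=
    (q₁.append q₂).isPath_of_length_eq_dist (by rw [Walk.length_append, hq₁, hq₂, h])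
  have hbypass : q₁.append q₂ = p.bypass := (hG.existsUnique_path x y).unique hq p.bypass_isPath
  apply p.support_bypass_subset_support
  rw [← hbypass]
  exact (Walk.mem_support_append_iff _ _).2 (Or.inl q₁.end_mem_support)

theorem Relation.ReflTransGen.exists_walk_support_subset {α V : Type*} {G : SimpleGraph V}
    {r : α → α → Prop} {f : α → V} (hf : ∀ a b, r a b → G.Adj (f a) (f b)) {a b : α}
    (h : ReflTransGen r a b) :
    ∃ p : G.Walk (f a) (f b), ∀ w ∈ p.support, ∃ c, ReflTransGen r a c ∧ f c = w := by
  induction h with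
  | refl => exact ⟨.nil, fun w hw => ⟨a, .refl, (List.mem_singleton.1 hw).symm⟩⟩
  | tail hab hbc ih =>
    obtain ⟨p, hp⟩ := ih
    refine ⟨p.concat (hf _ _ hbc), fun w hw => ?_⟩
    rw [SimpleGraph.Walk.support_concat, List.mem_append, List.mem_singleton] at hw
    rcases hw with hw | rfl
    · exact hp w hw
    · exact ⟨_, hab.tail hbc, rfl⟩

theorem GeodesicPathD.dist_add_dist_eq {A : Type*} {d : A → A → ℝ} {γ : ℝ → A} {a b t : ℝ}
    (hγ : GeodesicPathD d γ a b) (ht : t ∈ Set.Icc a b) :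
    d (γ a) (γ t) + d (γ t) (γ b) = d (γ a) (γ b) := by
  have hab : a ≤ b := ht.1.trans ht.2
  rw [hγ a ⟨le_rfl, hab⟩ t ht, hγ t ht b ⟨hab, le_rfl⟩, hγ a ⟨le_rfl, hab⟩ b ⟨hab, le_rfl⟩,
    abs_of_nonpos (by linarith [ht.1]), abs_of_nonpos (by linarith [ht.2]),
    abs_of_nonpos (by linarith)]
  ring

theorem GromovHyperbolicD.dist_le_of_dist_eq_of_dist_eq {A : Type*} {d : A → A → ℝ} {δ : ℝ}
    (hd : GromovHyperbolicD d δ) (hsymm : ∀ a b, d a b = d b a) {x y z w : A}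
    (hx : d x w = d x z) (hy : d w y = d z y) (hz : d x z + d z y = d x y) :
    d z w ≤ 2 * δ := by
  have h := hd z w x y
  rw [hsymm z x, hsymm w x, hx, hy, add_comm (d z y), max_self, hz] at h
  linarith

namespace TreeOfRelHypSpaces

variable {S : TreeOfRelHypSpaces} {α β : S.Λ}

theorem sameTree.symm (h : S.sameTree α β) : S.sameTree β α :=
  Relation.ReflTransGen.mono (fun _ _ => Or.symm) _ _ (Relation.ReflTransGen.swap _ _ h)

theorem dhat_inr_eq_dist (h : S.sameTree α β) :
    S.dhat (.inr α) (.inr β) = (S.G.dist (S.hsv α) (S.hsv β) : ℝ) :=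
  le_antisymm (S.cone_tree_iso α β h) (S.proj_lip (.inr α) (.inr β))

theorem exists_sameTree_hsv_eq (h : S.sameTree α β) {w : S.V}
    (hw : S.G.dist (S.hsv α) w + S.G.dist w (S.hsv β) = S.G.dist (S.hsv α) (S.hsv β)) :
    ∃ γ, S.sameTree α γ ∧ S.hsv γ = w := by
  have hadj : ∀ a b, (S.coneAdj a b ∨ S.coneAdj b a) → S.G.Adj (S.hsv a) (S.hsv b) :=
    fun a b hab => hab.elim (S.coneAdj_adj a b) fun hba => (S.coneAdj_adj b a hba).symm
  obtain ⟨p, hp⟩ := Relation.ReflTransGen.exists_walk_support_subset hadj h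
  exact hp w (S.htree.mem_support_of_dist_add_dist_eq hw p)

theorem exists_sameTree_dhat_eq (h : S.sameTree α β) {z : S.X ⊕ S.Λ}
    (hz : S.dhat (.inr α) z + S.dhat z (.inr β) = S.dhat (.inr α) (.inr β)) :
    ∃ γ, S.sameTree α γ ∧ S.dhat (.inr α) (.inr γ) = S.dhat (.inr α) z ∧
      S.dhat (.inr γ) (.inr β) = S.dhat z (.inr β) := by
  have h₁ : (S.G.dist (S.hsv α) (S.Phat z) : ℝ) ≤ S.dhat (.inr α) z :=
    S.proj_lip (.inr α) z
  have h₂ : (S.G.dist (S.Phat z) (S.hsv β) : ℝ) ≤ S.dhat z (.inr β) :=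
    S.proj_lip z (.inr β)
  have htri : (S.G.dist (S.hsv α) (S.hsv β) : ℝ) ≤
      S.G.dist (S.hsv α) (S.Phat z) + S.G.dist (S.Phat z) (S.hsv β) := by
    exact_mod_cast S.htree.connected.dist_triangle
  rw [dhat_inr_eq_dist h] at hz
  have e₁ : (S.G.dist (S.hsv α) (S.Phat z) : ℝ) = S.dhat (.inr α) z := by linarith
  have e₂ : (S.G.dist (S.Phat z) (S.hsv β) : ℝ) = S.dhat z (.inr β) := by linarith
  rw [← e₁, ← e₂] at hz
  obtain ⟨γ, hαγ, hγz⟩ := exists_sameTree_hsv_eq h (w := S.Phat z) (by exact_mod_cast hz)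
  refine ⟨γ, hαγ, ?_, ?_⟩
  · rw [dhat_inr_eq_dist hαγ, hγz, e₁]
  · rw [dhat_inr_eq_dist (hαγ.symm.trans h), hγz, e₂]

end TreeOfRelHypSpaces

/-- **Lemma 3.8.** Let `X` be a tree of spaces over a simplicial tree `T` and
`X̂` the induced tree of coned-off spaces (with projection `P' = Phat`).
If `X̂` is hyperbolic, then the maximal cone-subtrees `T_α` are uniformly
quasiconvex in `X̂`; moreover each `T_α` is isometrically embedded via the tree
metric — `dhat p q = d_T(P' p, P' q)` for `p, q ∈ T_α` — so geodesic edge-paths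
in `T_α` are geodesics of `X̂`. -/
theorem cone_subtrees_quasiconvex (S : TreeOfRelHypSpaces) (Δ : ℝ)
    (hhyp : GromovHyperbolicD S.dhat Δ) :
    (∃ C : ℝ, ∀ α : S.Λ, QuasiconvexD S.dhat C (S.Tset α)) ∧
    (∀ α : S.Λ, ∀ p ∈ S.Tset α, ∀ q ∈ S.Tset α,
      S.dhat p q = (S.G.dist (S.Phat p) (S.Phat q) : ℝ)) := by
  refine ⟨⟨2 * Δ, ?_⟩, ?_⟩
  · rintro α γ a b hγ ⟨β, hβa, hαβ⟩ ⟨β', hβ'b, hαβ'⟩ t ht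
    have hsplit := hγ.dist_add_dist_eq ht
    rw [hβa, hβ'b] at hsplit
    obtain ⟨δ, hβδ, hδa, hδb⟩ :=
      TreeOfRelHypSpaces.exists_sameTree_dhat_eq (hαβ.symm.trans hαβ') hsplit
    exact ⟨.inr δ, ⟨δ, rfl, hαβ.trans hβδ⟩,
      hhyp.dist_le_of_dist_eq_of_dist_eq S.dhat_pseudo.symm hδa hδb hsplit⟩
  · rintro α _ ⟨β, rfl, hαβ⟩ _ ⟨β', rfl, hαβ'⟩
    exact TreeOfRelHypSpaces.dhat_inr_eq_dist (hαβ.symm.trans hαβ')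
end
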